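/- Let S be a countable ℵ₀-categorical semigroup. Then for each of Green's relations K ∈ {R, L, H, D, J}, the set of cardinalities {|K_a| : a ∈ S} is finite. Moreover, among the K-classes that are subsemigroups of S there are only finitely many up to isomorphism, and each such K-class is ℵ₀-categorical. In particular, S has only finitely many maximal subgroups up to group isomorphism, and each maximal subgroup of S is an ℵ₀-categorical group. -/

import Mathlib

/-- Two `n`-tuples of a semigroup are automorphically equivalent if some semigroup
automorphism maps one to the other componentwise. -/
def AutRel (S : Type*) [Semigroup S] {n : ℕ} (a b : Fin n → S) : Prop :=
  ∃ φ : S ≃* S, ∀ k, φ (a k) = b k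

/-- A semigroup is ℵ₀-categorical if, for every `n ≥ 1`, the action of its automorphism
group on `n`-tuples has only finitely many orbits. -/
def Aleph0Categorical (S : Type*) [Semigroup S] : Prop :=
  ∀ n : ℕ, 1 ≤ n → ∃ t : Set (Fin n → S), t.Finite ∧
    ∀ a : Fin n → S, ∃ b ∈ t, AutRel S b a

section Green

variable (S : Type*) [Semigroup S]

/-- The principal right ideal `aS¹ = {a} ∪ aS`. -/
def rIdealSet (a : S) : Set S := {a} ∪ {x | ∃ s, x = a * s}

/-- The principal left ideal `S¹a = {a} ∪ Sa`. -/
def lIdealSet (a : S) : Set S := {a} ∪ {x | ∃ s, x = s * a}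

/-- The principal two-sided ideal `S¹aS¹ = {a} ∪ aS ∪ Sa ∪ SaS`. -/
def jIdealSet (a : S) : Set S :=
  {a} ∪ {x | ∃ s, x = a * s} ∪ {x | ∃ s, x = s * a} ∪ {x | ∃ s u, x = s * a * u}

/-- Green's relation `R`. -/
def GreenR (a b : S) : Prop := rIdealSet S a = rIdealSet S b

/-- Green's relation `L`. -/
def GreenL (a b : S) : Prop := lIdealSet S a = lIdealSet S b

/-- Green's relation `J`. -/
def GreenJ (a b : S) : Prop := jIdealSet S a = jIdealSet S b

/-- Green's relation `H = R ∩ L`. -/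
def GreenH (a b : S) : Prop := GreenR S a b ∧ GreenL S a b

/-- Green's relation `D = R ∘ L`. -/
def GreenD (a b : S) : Prop := ∃ c : S, GreenR S a c ∧ GreenL S c b

/-- A subset closed under multiplication. -/
def MulClosed (A : Set S) : Prop := ∀ a ∈ A, ∀ b ∈ A, a * b ∈ A

/-- A multiplicatively closed subset regarded as a subsemigroup. -/
def toSub (A : Set S) (h : MulClosed S A) : Subsemigroup S :=
  ⟨A, fun ha hb => h _ ha _ hb⟩

/-- The conclusion of the theorem for one of Green's relations `K`:
the set of cardinalities of `K`-classes is finite; among the `K`-classes that are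
subsemigroups there are only finitely many up to isomorphism; and every `K`-class that
is a subsemigroup is ℵ₀-categorical. -/
def GreenConclusion (rel : S → S → Prop) : Prop :=
  (Set.range fun a : S => Cardinal.mk {b : S | rel a b}).Finite ∧
  (∃ F : Set S, F.Finite ∧
    ∀ (a : S) (h : MulClosed S {b : S | rel a b}), ∃ b ∈ F,
      ∃ h' : MulClosed S {c : S | rel b c},
        Nonempty ((toSub S _ h) ≃* (toSub S _ h'))) ∧
  ∀ (a : S) (h : MulClosed S {b : S | rel a b}), Aleph0Categorical (toSub S _ h)

end Green

/-!
Green's relations are defined through principal ideals, which automorphisms carry to principal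
ideals, so every automorphism `φ` of `S` maps each `K`-class `K_a` bijectively and
multiplicatively onto `K_{φ a}`. As `Aut S` has finitely many orbits on `S`, there are finitely
many `K`-classes up to automorphism, which bounds both their cardinalities and their isomorphism
types. For categoricity, automorphisms of `S` fixing `a` restrict to automorphisms of `K_a`, and
`n`-tuples `x` of `K_a` are sorted by the `Aut S`-orbit of the `(n+1)`-tuple `(a, x)`.
-/

theorem Set.Finite.exists_finite_meets_fibers {α β : Type*} {f : α → β}
    (hf : (Set.range f).Finite) :
    ∃ s : Set α, s.Finite ∧ ∀ x, ∃ y ∈ s, f y = f x := by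
  obtain ⟨s, -, hbij⟩ := Set.exists_subset_bijOn Set.univ f
  refine ⟨s, .of_finite_image ?_ hbij.injOn, fun x => ?_⟩
  · rwa [hbij.image_eq, Set.image_univ]
  · obtain ⟨y, hy, hyx⟩ := hbij.surjOn ⟨x, trivial, rfl⟩
    exact ⟨y, hy, hyx⟩

section Invariance

variable {S : Type*} [Semigroup S]

theorem AutRel.symm {n : ℕ} {a b : Fin n → S} (h : AutRel S a b) : AutRel S b a :=
  let ⟨φ, hφ⟩ := h
  ⟨φ.symm, fun k => by rw [← hφ k, MulEquiv.symm_apply_apply]⟩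

theorem AutRel.trans {n : ℕ} {a b c : Fin n → S} (hab : AutRel S a b) (hbc : AutRel S b c) :
    AutRel S a c :=
  let ⟨φ, hφ⟩ := hab
  let ⟨ψ, hψ⟩ := hbc
  ⟨φ.trans ψ, fun k => by rw [MulEquiv.trans_apply, hφ, hψ]⟩

theorem Aleph0Categorical.exists_finite_orbit_reps (hcat : Aleph0Categorical S) :
    ∃ F : Set S, F.Finite ∧ ∀ a, ∃ f ∈ F, ∃ φ : S ≃* S, φ f = a := by
  obtain ⟨t, ht, hrep⟩ := hcat 1 le_rfl
  refine ⟨(· 0) '' t, ht.image _, fun a => ?_⟩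
  obtain ⟨c, hc, φ, hφ⟩ := hrep fun _ => a
  exact ⟨c 0, ⟨c, hc, rfl⟩, φ, hφ 0⟩

theorem Aleph0Categorical.subsemigroup_of_stabilizer_invariant (hcat : Aleph0Categorical S)
    (T : Subsemigroup S) (a : S) (hT : ∀ ψ : S ≃* S, ψ a = a → T.map (ψ : S →ₙ* S) = T) :
    Aleph0Categorical T := by
  intro n _
  obtain ⟨t, ht, hrep⟩ := hcat (n + 1) n.succ_pos
  let cons : (Fin n → T) → Fin (n + 1) → S := fun x => Fin.cons a fun k => x k
  choose rep hrep_mem hrep_rel using fun x => hrep (cons x)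
  obtain ⟨s, hs, hsec⟩ :=
    Set.Finite.exists_finite_meets_fibers (ht.subset (Set.range_subset_iff.2 hrep_mem))
  refine ⟨s, hs, fun x => ?_⟩
  obtain ⟨y, hy, hyx⟩ := hsec x
  obtain ⟨ψ, hψ⟩ : AutRel S (cons y) (cons x) := (hrep_rel y).symm.trans (hyx ▸ hrep_rel x)
  exact ⟨y, hy, (ψ.subsemigroupMap T).trans (MulEquiv.subsemigroupCongr (hT ψ (hψ 0))),
    fun k => Subtype.ext (hψ k.succ)⟩

def IsAutInvariant (rel : S → S → Prop) : Prop :=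
  ∀ (φ : S ≃* S) (x y : S), rel (φ x) (φ y) ↔ rel x y

namespace IsAutInvariant

variable {rel : S → S → Prop}

theorem image_setOf (hrel : IsAutInvariant rel) (φ : S ≃* S) (a : S) :
    φ '' {b | rel a b} = {b | rel (φ a) b} := by
  ext b
  obtain ⟨b, rfl⟩ := φ.surjective b
  rw [φ.injective.mem_set_image]
  exact (hrel φ a b).symm

theorem mk_setOf_map (hrel : IsAutInvariant rel) (φ : S ≃* S) (a : S) :
    Cardinal.mk {b | rel (φ a) b} = Cardinal.mk {b | rel a b} := by
  rw [← hrel.image_setOf, Cardinal.mk_image_eq φ.injective]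

theorem mulClosed_of_map (hrel : IsAutInvariant rel) (φ : S ≃* S) (a : S)
    (h : MulClosed S {b | rel (φ a) b}) : MulClosed S {b | rel a b} := fun x hx y hy =>
  (hrel φ a (x * y)).1 (map_mul φ x y ▸ h _ ((hrel φ a x).2 hx) _ ((hrel φ a y).2 hy))

theorem nonempty_mulEquiv_map (hrel : IsAutInvariant rel) (φ : S ≃* S) (a : S)
    (hA : MulClosed S {b | rel a b}) (hB : MulClosed S {b | rel (φ a) b}) :
    Nonempty (toSub S _ hA ≃* toSub S _ hB) :=
  ⟨(φ.subsemigroupMap _).trans <|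
    MulEquiv.subsemigroupCongr (SetLike.ext' (hrel.image_setOf φ a))⟩

theorem aleph0Categorical_toSub (hrel : IsAutInvariant rel) (hcat : Aleph0Categorical S) (a : S)
    (h : MulClosed S {b | rel a b}) : Aleph0Categorical (toSub S _ h) :=
  hcat.subsemigroup_of_stabilizer_invariant _ a fun ψ hψ =>
    SetLike.ext' ((hrel.image_setOf ψ a).trans (by rw [hψ]; rfl))

theorem greenConclusion (hrel : IsAutInvariant rel) (hcat : Aleph0Categorical S) :
    GreenConclusion S rel := by
  obtain ⟨F, hF, hrep⟩ := hcat.exists_finite_orbit_reps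
  refine ⟨(hF.image fun f => Cardinal.mk {b | rel f b}).subset ?_, ⟨F, hF, fun a h => ?_⟩,
    hrel.aleph0Categorical_toSub hcat⟩
  · rintro _ ⟨a, rfl⟩
    obtain ⟨f, hf, φ, rfl⟩ := hrep a
    exact ⟨f, hf, (hrel.mk_setOf_map φ f).symm⟩
  · obtain ⟨f, hf, φ, rfl⟩ := hrep a
    have h' := hrel.mulClosed_of_map φ f h
    exact ⟨f, hf, h', (hrel.nonempty_mulEquiv_map φ f h' h).map MulEquiv.symm⟩

end IsAutInvariant

theorem image_eq_of_forall_image_subset {A : S → Set S}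
    (hA : ∀ (φ : S ≃* S) (a : S), φ '' A a ⊆ A (φ a)) (φ : S ≃* S) (a : S) :
    φ '' A a = A (φ a) := by
  refine (hA φ a).antisymm fun x hx => ⟨φ.symm x, ?_, φ.apply_symm_apply x⟩
  simpa using hA φ.symm (φ a) ⟨x, hx, rfl⟩

theorem image_rIdealSet (φ : S ≃* S) (a : S) : φ '' rIdealSet S a = rIdealSet S (φ a) := by
  refine image_eq_of_forall_image_subset (fun φ a => ?_) φ a
  rintro _ ⟨x, rfl | ⟨s, rfl⟩, rfl⟩
  exacts [Or.inl rfl, Or.inr ⟨φ s, map_mul φ a s⟩]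

theorem image_lIdealSet (φ : S ≃* S) (a : S) : φ '' lIdealSet S a = lIdealSet S (φ a) := by
  refine image_eq_of_forall_image_subset (fun φ a => ?_) φ a
  rintro _ ⟨x, rfl | ⟨s, rfl⟩, rfl⟩
  exacts [Or.inl rfl, Or.inr ⟨φ s, map_mul φ s a⟩]

theorem image_jIdealSet (φ : S ≃* S) (a : S) : φ '' jIdealSet S a = jIdealSet S (φ a) := by
  refine image_eq_of_forall_image_subset (fun φ a => ?_) φ a
  rintro _ ⟨x, ((rfl | ⟨s, rfl⟩) | ⟨s, rfl⟩) | ⟨s, u, rfl⟩, rfl⟩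
  exacts [.inl (.inl (.inl rfl)), .inl (.inl (.inr ⟨φ s, map_mul φ a s⟩)),
    .inl (.inr ⟨φ s, map_mul φ s a⟩), .inr ⟨φ s, φ u, by rw [map_mul, map_mul]⟩]

theorem isAutInvariant_greenR : IsAutInvariant (GreenR S) := fun φ x y => by
  rw [GreenR, GreenR, ← image_rIdealSet, ← image_rIdealSet, Set.image_eq_image φ.injective]

theorem isAutInvariant_greenL : IsAutInvariant (GreenL S) := fun φ x y => by
  rw [GreenL, GreenL, ← image_lIdealSet, ← image_lIdealSet, Set.image_eq_image φ.injective]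

theorem isAutInvariant_greenJ : IsAutInvariant (GreenJ S) := fun φ x y => by
  rw [GreenJ, GreenJ, ← image_jIdealSet, ← image_jIdealSet, Set.image_eq_image φ.injective]

theorem isAutInvariant_greenH : IsAutInvariant (GreenH S) := fun φ x y =>
  and_congr (isAutInvariant_greenR φ x y) (isAutInvariant_greenL φ x y)

theorem isAutInvariant_greenD : IsAutInvariant (GreenD S) := fun φ x y => by
  constructor
  · rintro ⟨c, hR, hL⟩
    obtain ⟨c, rfl⟩ := φ.surjective c
    exact ⟨c, (isAutInvariant_greenR φ x c).1 hR, (isAutInvariant_greenL φ c y).1 hL⟩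
  · rintro ⟨c, hR, hL⟩
    exact ⟨φ c, (isAutInvariant_greenR φ x c).2 hR, (isAutInvariant_greenL φ c y).2 hL⟩

end Invariance

theorem aleph0Categorical_green (S : Type*) [Semigroup S]
    (hcat : Aleph0Categorical S) :
    GreenConclusion S (GreenR S) ∧ GreenConclusion S (GreenL S) ∧
    GreenConclusion S (GreenH S) ∧ GreenConclusion S (GreenD S) ∧
    GreenConclusion S (GreenJ S) ∧
    ((∃ F : Set S, F.Finite ∧ (∀ e ∈ F, e * e = e) ∧
        ∀ e : S, e * e = e → ∀ h : MulClosed S {b : S | GreenH S e b}, ∃ f ∈ F,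
          ∃ h' : MulClosed S {b : S | GreenH S f b},
            Nonempty ((toSub S _ h) ≃* (toSub S _ h'))) ∧
      ∀ e : S, e * e = e → ∀ h : MulClosed S {b : S | GreenH S e b},
        Aleph0Categorical (toSub S _ h)) := by
  have hH := isAutInvariant_greenH (S := S)
  refine ⟨isAutInvariant_greenR.greenConclusion hcat, isAutInvariant_greenL.greenConclusion hcat,
    hH.greenConclusion hcat, isAutInvariant_greenD.greenConclusion hcat,
    isAutInvariant_greenJ.greenConclusion hcat, ?_, fun e _ => hH.aleph0Categorical_toSub hcat e⟩
  obtain ⟨F, hF, hrep⟩ := hcat.exists_finite_orbit_reps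
  refine ⟨{f ∈ F | f * f = f}, hF.sep _, fun f hf => hf.2, fun e he h => ?_⟩
  obtain ⟨f, hf, φ, rfl⟩ := hrep e
  have hff : f * f = f := φ.injective (by rw [map_mul, he])
  have h' := hH.mulClosed_of_map φ f h
  exact ⟨f, ⟨hf, hff⟩, h', (hH.nonempty_mulEquiv_map φ f h' h).map MulEquiv.symm⟩
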